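/- arXiv:1505.04901 — 7 statements merged into one kernel-verified Lean document; each statement's English description precedes it below -/
import Mathlib

section
/- Let U ⊆ ℝ^M be a nonempty set and let g : ℝ^M → ℝ be quasiconvex on conv(U). Then the supremum of g over conv(U) equals the supremum of g over U, i.e., sSup (g '' conv(U)) = sSup (g '' U) (the two image sets have exactly the same upper bounds, so in particular one is bounded above if and only if the other is). -/
/-!
A point `x` of `conv U` with `g u < g x` for every `u ∈ U` is impossible: `U` would lie in the
strict sublevel set `{g < g x}` of `conv U`, which is convex by quasiconvexity, so this set would
contain `conv U ∋ x`. Hence every value of `g` on `conv U` is dominated by a value on `U`, and the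
two image sets have the same upper bounds and the same supremum.
-/

open Set

theorem QuasiconvexOn.exists_le_of_mem_convexHull {𝕜 E β : Type*} [Semiring 𝕜] [PartialOrder 𝕜]
    [AddCommMonoid E] [Module 𝕜 E] [LinearOrder β] {s : Set E} {f : E → β}
    (hf : QuasiconvexOn 𝕜 (convexHull 𝕜 s) f) {x : E} (hx : x ∈ convexHull 𝕜 s) :
    ∃ y ∈ s, f x ≤ f y := by
  by_contra! hlt
  have hsub : s ⊆ {y ∈ convexHull 𝕜 s | f y < f x} := fun y hy ↦
    ⟨subset_convexHull 𝕜 s hy, hlt y hy⟩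
  exact (convexHull_min hsub (hf.convex_lt (f x)) hx).2.false

theorem upperBounds_eq_of_subset_of_forall_exists_le {α : Type*} [Preorder α] {s t : Set α}
    (hst : s ⊆ t) (hts : ∀ x ∈ t, ∃ y ∈ s, x ≤ y) : upperBounds t = upperBounds s := by
  refine (upperBounds_mono_set hst).antisymm fun b hb x hx ↦ ?_
  obtain ⟨y, hy, hxy⟩ := hts x hx
  exact hxy.trans (hb hy)

theorem sSup_image_convexHull_eq_of_quasiconvexOn_general
    (M : ℕ) (U : Set (Fin M → ℝ))
    (g : (Fin M → ℝ) → ℝ) (hg : QuasiconvexOn ℝ (convexHull ℝ U) g) :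
    upperBounds (g '' convexHull ℝ U) = upperBounds (g '' U) ∧
    sSup (g '' convexHull ℝ U) = sSup (g '' U) ∧
    (BddAbove (g '' convexHull ℝ U) ↔ BddAbove (g '' U)) := by
  have hsub : g '' U ⊆ g '' convexHull ℝ U := image_mono (subset_convexHull ℝ U)
  have hdom : ∀ y ∈ g '' convexHull ℝ U, ∃ z ∈ g '' U, y ≤ z := by
    rintro _ ⟨x, hx, rfl⟩
    obtain ⟨u, hu, hle⟩ := hg.exists_le_of_mem_convexHull hx
    exact ⟨g u, mem_image_of_mem g hu, hle⟩
  have hub := upperBounds_eq_of_subset_of_forall_exists_le hsub hdom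
  exact ⟨hub, csSup_eq_csSup_of_forall_exists_le hdom fun y hy ↦ ⟨y, hsub hy, le_rfl⟩,
    by simp only [BddAbove, hub]⟩

/-- For a quasiconvex function on `convexHull ℝ U`, the supremum of `g` over
`convexHull ℝ U` equals the supremum over `U`: the two image sets have exactly the same
upper bounds, hence the same `sSup`, and one is bounded above iff the other is. -/
theorem sSup_image_convexHull_eq_of_quasiconvexOn
    (M : ℕ) (U : Set (Fin M → ℝ)) (hU : U.Nonempty)
    (g : (Fin M → ℝ) → ℝ) (hg : QuasiconvexOn ℝ (convexHull ℝ U) g) :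
    upperBounds (g '' convexHull ℝ U) = upperBounds (g '' U) ∧
    sSup (g '' convexHull ℝ U) = sSup (g '' U) ∧
    (BddAbove (g '' convexHull ℝ U) ↔ BddAbove (g '' U)) :=
  sSup_image_convexHull_eq_of_quasiconvexOn_general M U g hg
end

section
/- Let x, â, d ∈ ℝ^n with d ≥ 0, and let Γ ∈ {0, 1, …, n}. Define the cardinality-constrained uncertainty set U(Γ) = {a ∈ ℝ^n : a_i ∈ [â_i − d_i, â_i + d_i] for all i, and a_i ≠ â_i for at most Γ indices i}. Then sup_{a ∈ U(Γ)} Σ_{i=1}^n a_i x_i = Σ_{i=1}^n â_i x_i + max_{S ⊆ {1,…,n}, |S| = Γ} Σ_{i∈S} d_i |x_i|. Consequently, x satisfies Σ_i a_i x_i ≤ b for all a ∈ U(Γ) if and only if x satisfies the Bertsimas–Sim constraint Σ_i â_i x_i + max_{|S|=Γ} Σ_{i∈S} d_i|x_i| ≤ b. -/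
/-!
Every scenario deviates from `â` on at most `Γ` coordinates, hence on a subset of some `Γ`-set
`S`, and a deviation `|a_i - â_i| ≤ d_i` changes `a_i x_i` by at most `d_i |x_i|`; so
`Σ a_i x_i ≤ Σ â_i x_i + Σ_{i∈S} d_i |x_i|`. Conversely, for a maximising `S` the scenario
`a_i = â_i + d_i sign x_i` on `S` (and `a_i = â_i` off `S`) attains this bound, so the supremum is
a maximum, and a maximum is `≤ b` exactly when every element is.
-/

open Finset

variable {ι : Type*} [Fintype ι]

def budgetedBox (ahat d : ι → ℝ) (Γ : ℕ) : Set (ι → ℝ) :=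
  {a | (∀ i, a i ∈ Set.Icc (ahat i - d i) (ahat i + d i)) ∧
    (univ.filter fun i => a i ≠ ahat i).card ≤ Γ}

lemma sub_mul_le_mul_abs_of_mem_Icc {a ahat δ y : ℝ} (h : a ∈ Set.Icc (ahat - δ) (ahat + δ)) :
    (a - ahat) * y ≤ δ * |y| :=
  calc (a - ahat) * y ≤ |a - ahat| * |y| := by rw [← abs_mul]; exact le_abs_self _
    _ ≤ δ * |y| := by
      gcongr
      exact abs_sub_le_iff.mpr ⟨by linarith [h.2], by linarith [h.1]⟩

lemma sum_mul_le_add_sum_of_eq_off {a ahat d x : ι → ℝ} {S : Finset ι}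
    (hbox : ∀ i, a i ∈ Set.Icc (ahat i - d i) (ahat i + d i)) (hoff : ∀ i ∉ S, a i = ahat i) :
    ∑ i, a i * x i ≤ ∑ i, ahat i * x i + ∑ i ∈ S, d i * |x i| := by
  have hdev : ∑ i, (a i - ahat i) * x i = ∑ i ∈ S, (a i - ahat i) * x i :=
    (sum_subset (subset_univ S) fun i _ hi => by simp [hoff i hi]).symm
  calc ∑ i, a i * x i = ∑ i, ahat i * x i + ∑ i ∈ S, (a i - ahat i) * x i := by
        rw [← hdev, ← sum_add_distrib]
        exact sum_congr rfl fun i _ => by ring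
    _ ≤ ∑ i, ahat i * x i + ∑ i ∈ S, d i * |x i| :=
        (add_le_add_iff_left _).mpr (sum_le_sum fun i _ => sub_mul_le_mul_abs_of_mem_Icc (hbox i))

lemma sum_mul_le_of_mem_budgetedBox {a ahat d x : ι → ℝ} {Γ : ℕ}
    (hne : (univ.powersetCard Γ : Finset (Finset ι)).Nonempty) (ha : a ∈ budgetedBox ahat d Γ) :
    ∑ i, a i * x i ≤
      ∑ i, ahat i * x i + (univ.powersetCard Γ).sup' hne fun S => ∑ i ∈ S, d i * |x i| := by
  obtain ⟨hbox, hcard⟩ := ha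
  obtain ⟨S, hdevS, -, hS⟩ := exists_subsuperset_card_eq (subset_univ _) hcard
    (card_univ (α := ι) ▸ powersetCard_nonempty.mp hne)
  have hoff : ∀ i ∉ S, a i = ahat i := fun i hi => by
    by_contra h
    exact hi (hdevS (by simpa using h))
  grw [sum_mul_le_add_sum_of_eq_off hbox hoff]
  gcongr
  exact le_sup' (fun S => ∑ i ∈ S, d i * |x i|) (mem_powersetCard.mpr ⟨subset_univ S, hS⟩)

variable [DecidableEq ι]

noncomputable def worstCase (ahat d x : ι → ℝ) (S : Finset ι) (i : ι) : ℝ :=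
  ahat i + if i ∈ S then d i * SignType.sign (x i) else 0

lemma worstCase_mem_budgetedBox {ahat d x : ι → ℝ} {S : Finset ι} {Γ : ℕ} (hd : ∀ i, 0 ≤ d i)
    (hS : S.card ≤ Γ) : worstCase ahat d x S ∈ budgetedBox ahat d Γ := by
  refine ⟨fun i => ?_, (card_le_card fun i hi => ?_).trans hS⟩
  · have hsign : |(SignType.sign (x i) : ℝ)| ≤ 1 := by cases SignType.sign (x i) <;> simp
    have hdev : |d i * SignType.sign (x i)| ≤ d i := by
      rw [abs_mul, abs_of_nonneg (hd i)]
      exact mul_le_of_le_one_right (hd i) hsign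
    unfold worstCase
    split_ifs
    · constructor <;> linarith [abs_le.mp hdev]
    · constructor <;> linarith [hd i]
  · by_contra hiS
    simp [worstCase, hiS] at hi

lemma sum_worstCase_mul (ahat d x : ι → ℝ) (S : Finset ι) :
    ∑ i, worstCase ahat d x S i * x i = ∑ i, ahat i * x i + ∑ i ∈ S, d i * |x i| := by
  have hterm : ∀ i, worstCase ahat d x S i * x i =
      ahat i * x i + if i ∈ S then d i * |x i| else 0 := fun i => by
    unfold worstCase
    split_ifs
    · rw [← sign_mul_self (x i)]; ring
    · ring
  simp only [hterm, sum_add_distrib, sum_ite_mem, univ_inter]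

lemma isGreatest_sum_mul_image_budgetedBox {ahat d : ι → ℝ} (x : ι → ℝ) {Γ : ℕ}
    (hd : ∀ i, 0 ≤ d i) (hne : (univ.powersetCard Γ : Finset (Finset ι)).Nonempty) :
    IsGreatest ((fun a => ∑ i, a i * x i) '' budgetedBox ahat d Γ)
      (∑ i, ahat i * x i + (univ.powersetCard Γ).sup' hne fun S => ∑ i ∈ S, d i * |x i|) := by
  obtain ⟨S, hSmem, hSmax⟩ := exists_mem_eq_sup' hne fun S => ∑ i ∈ S, d i * |x i|
  refine ⟨⟨worstCase ahat d x S, ?_, ?_⟩, ?_⟩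
  · exact worstCase_mem_budgetedBox hd (mem_powersetCard.mp hSmem).2.le
  · exact (sum_worstCase_mul ahat d x S).trans (by rw [hSmax])
  · rintro _ ⟨a, ha, rfl⟩
    exact sum_mul_le_of_mem_budgetedBox hne ha

/-- For the cardinality-constrained uncertainty set `U(Γ)` of Bertsimas–Sim,
`sup_{a ∈ U(Γ)} Σ_i a_i x_i = Σ_i â_i x_i + max_{|S| = Γ} Σ_{i∈S} d_i |x_i|`; consequently
`Σ_i a_i x_i ≤ b` holds for all `a ∈ U(Γ)` iff the Bertsimas–Sim constraint holds. -/
theorem cardinality_constrained_sup_and_constraint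
    (n : ℕ) (x ahat d : Fin n → ℝ) (hd : ∀ i, 0 ≤ d i)
    (Γ : ℕ) (hΓ : Γ ≤ n) (b : ℝ) :
    sSup ((fun a => ∑ i, a i * x i) ''
        {a : Fin n → ℝ | (∀ i, a i ∈ Set.Icc (ahat i - d i) (ahat i + d i)) ∧
          (Finset.univ.filter fun i => a i ≠ ahat i).card ≤ Γ}) =
      (∑ i, ahat i * x i) +
        (Finset.univ.powersetCard Γ).sup'
          (Finset.powersetCard_nonempty.mpr (by simpa using hΓ))
          (fun S => ∑ i ∈ S, d i * |x i|) ∧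
    ((∀ a ∈ {a : Fin n → ℝ | (∀ i, a i ∈ Set.Icc (ahat i - d i) (ahat i + d i)) ∧
          (Finset.univ.filter fun i => a i ≠ ahat i).card ≤ Γ},
        ∑ i, a i * x i ≤ b) ↔
      (∑ i, ahat i * x i) +
        (Finset.univ.powersetCard Γ).sup'
          (Finset.powersetCard_nonempty.mpr (by simpa using hΓ))
          (fun S => ∑ i ∈ S, d i * |x i|) ≤ b) := by
  have hmax := isGreatest_sum_mul_image_budgetedBox (ahat := ahat) x hd
    (powersetCard_nonempty.mpr (by simpa using hΓ))
  refine ⟨hmax.csSup_eq, ?_⟩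
  rw [isLUB_le_iff hmax.isLUB, mem_upperBounds, Set.forall_mem_image]
  rfl
end

section
/- Let v ∈ ℝ^n with v ≥ 0 and let Γ ∈ {0, 1, …, n}. Then the sum of the Γ largest entries of v satisfies the linear programming duality identity max_{S ⊆ {1,…,n}, |S| = Γ} Σ_{i∈S} v_i = min { Γ·z + Σ_{i=1}^n p_i : z ∈ ℝ, p ∈ ℝ^n, z ≥ 0, p ≥ 0, z + p_i ≥ v_i for all i }, and the minimum on the right-hand side is attained. -/
/-- LP duality identity underlying the Bertsimas–Sim linearization: for
`v ≥ 0` and `Γ ≤ n`, the sum of the `Γ` largest entries of `v` equals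
`min { Γ·z + Σ_i p_i : z ≥ 0, p ≥ 0, z + p_i ≥ v_i ∀ i }`, the minimum being attained. -/
theorem sum_largest_eq_min_dual
    (n : ℕ) (v : Fin n → ℝ) (hv : ∀ i, 0 ≤ v i) (Γ : ℕ) (hΓ : Γ ≤ n) :
    IsLeast {t : ℝ | ∃ (z : ℝ) (p : Fin n → ℝ), 0 ≤ z ∧ (∀ i, 0 ≤ p i) ∧
        (∀ i, v i ≤ z + p i) ∧ t = (Γ : ℝ) * z + ∑ i, p i}
      ((Finset.univ.powersetCard Γ).sup'
        (Finset.powersetCard_nonempty.mpr (by simpa using hΓ))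
        (fun S => ∑ i ∈ S, v i)) := by
  have hne : ((Finset.univ : Finset (Fin n)).powersetCard Γ).Nonempty :=
    Finset.powersetCard_nonempty.mpr (by simp [Finset.card_univ]; exact hΓ)
  obtain ⟨S₀, hS₀mem, hS₀⟩ := Finset.exists_mem_eq_sup' hne (fun S : Finset (Fin n) => ∑ i ∈ S, v i)
  have hcard : S₀.card = Γ := (Finset.mem_powersetCard.mp hS₀mem).2
  have hmax : ∀ T ∈ Finset.univ.powersetCard Γ, ∑ i ∈ T, v i ≤ ∑ i ∈ S₀, v i := by
    intro T hT
    have h := Finset.le_sup' (fun S : Finset (Fin n) => ∑ i ∈ S, v i) hT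
    rw [hS₀] at h
    exact h
  constructor
  · rw [hS₀]
    rcases Nat.eq_zero_or_pos Γ with hΓ0 | hΓpos
    · subst hΓ0
      have hS0 : S₀ = ∅ := Finset.card_eq_zero.mp hcard
      refine ⟨∑ i, v i, 0, Finset.sum_nonneg fun i _ => hv i, fun i => le_rfl, ?_, ?_⟩
      · intro i
        simpa using Finset.single_le_sum (fun j _ => hv j) (Finset.mem_univ i)
      · simp [hS0]
    · have hS₀ne : S₀.Nonempty := Finset.card_pos.mp (hcard ▸ hΓpos)
      set z := S₀.inf' hS₀ne v with hz
      have hz0 : 0 ≤ z := Finset.le_inf' hS₀ne v fun i _ => hv i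
      have hout : ∀ i, i ∉ S₀ → v i ≤ z := by
        intro i hi
        by_contra h
        push_neg at h
        obtain ⟨j, hj, hjz⟩ := Finset.exists_mem_eq_inf' hS₀ne v
        set T := insert i (S₀.erase j) with hT
        have hiT : i ∉ S₀.erase j := fun h' => hi (Finset.mem_of_mem_erase h')
        have hTcard : T.card = Γ := by
          rw [hT, Finset.card_insert_of_notMem hiT, Finset.card_erase_of_mem hj, hcard]
          omega
        have hTmem : T ∈ Finset.univ.powersetCard Γ :=
          Finset.mem_powersetCard.mpr ⟨Finset.subset_univ T, hTcard⟩
        have hsum : ∑ k ∈ T, v k = v i + (∑ k ∈ S₀, v k - v j) := by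
          rw [hT, Finset.sum_insert hiT, ← Finset.add_sum_erase _ v hj]
          ring
        have := hmax T hTmem
        rw [hsum, ← hjz] at this
        linarith
    -- p
      refine ⟨z, fun i => max (v i - z) 0, hz0, fun i => le_max_right _ _, ?_, ?_⟩
      · intro i
        have := le_max_left (v i - z) 0
        linarith
      · have hpzero : ∀ i ∈ Finset.univ, i ∉ S₀ → max (v i - z) 0 = 0 := by
          intro i _ hi
          simp [max_eq_right, sub_nonpos.mpr (hout i hi)]
        rw [← Finset.sum_subset (Finset.subset_univ S₀) hpzero]
        have hin : ∀ i ∈ S₀, max (v i - z) 0 = v i - z := by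
          intro i hi
          exact max_eq_left (sub_nonneg.mpr (Finset.inf'_le v hi))
        rw [Finset.sum_congr rfl hin, Finset.sum_sub_distrib, Finset.sum_const, hcard]
        ring
  · rintro t ⟨z, p, hz0, hp0, hvz, rfl⟩
    apply Finset.sup'_le
    intro S hS
    have hScard : S.card = Γ := (Finset.mem_powersetCard.mp hS).2
    calc ∑ i ∈ S, v i ≤ ∑ i ∈ S, (z + p i) := Finset.sum_le_sum fun i _ => hvz i
      _ = (Γ : ℝ) * z + ∑ i ∈ S, p i := by
          rw [Finset.sum_add_distrib, Finset.sum_const, hScard]; ring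
      _ ≤ (Γ : ℝ) * z + ∑ i, p i := by
          have := Finset.sum_le_sum_of_subset_of_nonneg (Finset.subset_univ S)
            (fun i _ _ => hp0 i)
          linarith
end

section
/- Let X ⊆ {0,1}^n be a finite nonempty set, and let c̲, c̄ ∈ ℝ^n with c̲_i ≤ c̄_i for all i define the interval uncertainty set U = {c ∈ ℝ^n : c̲_i ≤ c_i ≤ c̄_i for all i}. For x ∈ X define the scenario c^{wc}(x) by c^{wc}(x)_i = c̄_i if x_i = 1 and c^{wc}(x)_i = c̲_i if x_i = 0. Then the maximal regret of x satisfies max_{c ∈ U} ( cᵀx − min_{y ∈ X} cᵀy ) = c̄ᵀx − min_{y ∈ X} c^{wc}(x)ᵀ y; i.e., the worst-case regret scenario for x is c^{wc}(x), and the maximum over U is attained there. -/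
/-- For min-max regret with interval uncertainty over a finite binary feasible
set `X`, the maximal regret of `x ∈ X` is attained at the scenario `c^{wc}(x)` (upper bound
`c̄ i` where `x i = 1`, lower bound `c̲ i` where `x i = 0`) and equals
`c̄ᵀx − min_{y∈X} c^{wc}(x)ᵀy`. -/
theorem regret_worst_case_scenario
    (n : ℕ) (X : Finset (Fin n → ℝ)) (hX : X.Nonempty)
    (hbin : ∀ x ∈ X, ∀ i, x i = 0 ∨ x i = 1)
    (clo chi : Fin n → ℝ) (hc : ∀ i, clo i ≤ chi i)
    (x : Fin n → ℝ) (hx : x ∈ X) :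
    IsGreatest ((fun c => ∑ i, c i * x i - X.inf' hX (fun y => ∑ i, c i * y i)) ''
        {c : Fin n → ℝ | ∀ i, c i ∈ Set.Icc (clo i) (chi i)})
      ((∑ i, chi i * x i) -
        X.inf' hX (fun y => ∑ i, (if x i = 1 then chi i else clo i) * y i)) := by
  set cwc : Fin n → ℝ := fun i => if x i = 1 then chi i else clo i with hcwc
  have hxc : ∑ i, cwc i * x i = ∑ i, chi i * x i := by
    refine Finset.sum_congr rfl fun i _ => ?_
    rcases hbin x hx i with h | h
    · simp [h]
    · simp [cwc, h]
  constructor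
  · refine ⟨cwc, fun i => ?_, ?_⟩
    · constructor <;> simp only [cwc] <;> split_ifs <;> simp [hc i]
    · simp only
      rw [hxc]
  · rintro r ⟨c, hcU, rfl⟩
    obtain ⟨y0, hy0, hy0eq⟩ := Finset.exists_mem_eq_inf' hX (fun y => ∑ i, c i * y i)
    have h1 : X.inf' hX (fun y => ∑ i, cwc i * y i) ≤ ∑ i, cwc i * y0 i :=
      Finset.inf'_le _ hy0
    have h2 : ∑ i, c i * x i - ∑ i, c i * y0 i ≤
        ∑ i, cwc i * x i - ∑ i, cwc i * y0 i := by
      rw [← Finset.sum_sub_distrib, ← Finset.sum_sub_distrib]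
      refine Finset.sum_le_sum fun i _ => ?_
      have hl := (hcU i).1
      have hr := (hcU i).2
      rcases hbin x hx i with h | h <;> rcases hbin y0 hy0 i with h' | h' <;>
        simp only [cwc, h, h'] <;> norm_num <;> linarith
    simp only
    rw [hy0eq]
    linarith
end

section
/- Let X ⊆ {0,1}^n be a finite nonempty set, and let c̲, c̄ ∈ ℝ^n with 0 ≤ c̲_i ≤ c̄_i for all i define the interval uncertainty set U = {c : c̲ ≤ c ≤ c̄}. Define the maximal regret Reg(x) = max_{c ∈ U} ( cᵀx − min_{y∈X} cᵀy ). Let x^m ∈ X be any minimizer over X of the midpoint objective ĉᵀx, where ĉ = (c̲ + c̄)/2. Then Reg(x^m) ≤ 2 · min_{x ∈ X} Reg(x), i.e., the midpoint solution is a 2-approximation for the min-max regret problem with interval-based uncertainty. -/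
/-- The maximal regret of `x` over the interval uncertainty set `{c : c̲ ≤ c ≤ c̄}`,
where the regret of `x` under scenario `c` is `cᵀx − min_{y∈X} cᵀy`. -/
noncomputable def maxRegret (n : ℕ) (X : Finset (Fin n → ℝ)) (hX : X.Nonempty)
    (clo chi : Fin n → ℝ) (x : Fin n → ℝ) : ℝ :=
  sSup ((fun c => ∑ i, c i * x i - X.inf' hX (fun y => ∑ i, c i * y i)) ''
    {c : Fin n → ℝ | ∀ i, c i ∈ Set.Icc (clo i) (chi i)})

namespace MidpointAux

variable {n : ℕ}

/-- The worst-case scenario against adversary solution `y`. -/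
noncomputable def cw (clo chi y : Fin n → ℝ) : Fin n → ℝ :=
  fun i => if y i = 0 then chi i else clo i

/-- `F clo chi x y = cw(y) ⬝ (x - y)`. -/
noncomputable def F (clo chi x y : Fin n → ℝ) : ℝ :=
  ∑ i, cw clo chi y i * (x i - y i)

lemma cw_mem {clo chi : Fin n → ℝ} (hc : ∀ i, clo i ≤ chi i) (y : Fin n → ℝ) (i : Fin n) :
    cw clo chi y i ∈ Set.Icc (clo i) (chi i) := by
  unfold cw
  split <;> exact ⟨by simp [hc i], by simp [hc i]⟩

lemma pt_le {clo chi c x y : Fin n → ℝ}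
    (hcm : ∀ i, c i ∈ Set.Icc (clo i) (chi i))
    (hx : ∀ i, x i = 0 ∨ x i = 1) (hy : ∀ i, y i = 0 ∨ y i = 1) (i : Fin n) :
    c i * (x i - y i) ≤ cw clo chi y i * (x i - y i) := by
  obtain ⟨h1, h2⟩ := hcm i
  unfold cw
  rcases hx i with hxi | hxi <;> rcases hy i with hyi | hyi <;>
    simp [hxi, hyi] <;> linarith

lemma sum_le_F {clo chi c x y : Fin n → ℝ}
    (hcm : ∀ i, c i ∈ Set.Icc (clo i) (chi i))
    (hx : ∀ i, x i = 0 ∨ x i = 1) (hy : ∀ i, y i = 0 ∨ y i = 1) :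
    ∑ i, c i * x i - ∑ i, c i * y i ≤ F clo chi x y := by
  have : ∑ i, c i * x i - ∑ i, c i * y i = ∑ i, c i * (x i - y i) := by
    rw [← Finset.sum_sub_distrib]
    exact Finset.sum_congr rfl fun i _ => by ring
  rw [this]
  exact Finset.sum_le_sum fun i _ => pt_le hcm hx hy i

lemma pt_tri {clo chi : Fin n → ℝ} (hc : ∀ i, clo i ≤ chi i) {a b c : Fin n → ℝ}
    (ha : ∀ i, a i = 0 ∨ a i = 1) (hb : ∀ i, b i = 0 ∨ b i = 1)
    (hcc : ∀ i, c i = 0 ∨ c i = 1) (i : Fin n) :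
    cw clo chi c i * (a i - c i) ≤
      cw clo chi b i * (a i - b i) + cw clo chi c i * (b i - c i) := by
  have := hc i
  unfold cw
  rcases ha i with h1 | h1 <;> rcases hb i with h2 | h2 <;> rcases hcc i with h3 | h3 <;>
    simp [h1, h2, h3] <;> linarith

lemma F_tri {clo chi : Fin n → ℝ} (hc : ∀ i, clo i ≤ chi i) {a b c : Fin n → ℝ}
    (ha : ∀ i, a i = 0 ∨ a i = 1) (hb : ∀ i, b i = 0 ∨ b i = 1)
    (hcc : ∀ i, c i = 0 ∨ c i = 1) :
    F clo chi a c ≤ F clo chi a b + F clo chi b c := by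
  unfold F
  rw [← Finset.sum_add_distrib]
  exact Finset.sum_le_sum fun i _ => pt_tri hc ha hb hcc i

lemma pt_swap {clo chi x y : Fin n → ℝ}
    (hx : ∀ i, x i = 0 ∨ x i = 1) (hy : ∀ i, y i = 0 ∨ y i = 1) (i : Fin n) :
    cw clo chi y i * (x i - y i) =
      cw clo chi x i * (y i - x i) + (clo i + chi i) * (x i - y i) := by
  unfold cw
  rcases hx i with h1 | h1 <;> rcases hy i with h2 | h2 <;> simp [h1, h2] <;> ring

lemma F_swap {clo chi x y : Fin n → ℝ}
    (hx : ∀ i, x i = 0 ∨ x i = 1) (hy : ∀ i, y i = 0 ∨ y i = 1) :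
    F clo chi x y = F clo chi y x + ∑ i, (clo i + chi i) * (x i - y i) := by
  unfold F
  rw [← Finset.sum_add_distrib]
  exact Finset.sum_congr rfl fun i _ => pt_swap hx hy i

end MidpointAux

open MidpointAux in
/-- The midpoint solution (a minimizer of `ĉᵀx` with `ĉ = (c̲+c̄)/2` over `X`)
is a 2-approximation for the min-max regret problem with interval-based uncertainty. -/
theorem midpoint_two_approximation
    (n : ℕ) (X : Finset (Fin n → ℝ)) (hX : X.Nonempty)
    (hbin : ∀ x ∈ X, ∀ i, x i = 0 ∨ x i = 1)
    (clo chi : Fin n → ℝ) (hc0 : ∀ i, 0 ≤ clo i) (hc : ∀ i, clo i ≤ chi i)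
    (xm : Fin n → ℝ) (hxm : xm ∈ X)
    (hmid : ∀ y ∈ X,
      ∑ i, ((clo i + chi i) / 2) * xm i ≤ ∑ i, ((clo i + chi i) / 2) * y i) :
    maxRegret n X hX clo chi xm ≤ 2 * X.inf' hX (maxRegret n X hX clo chi) := by
  classical
  set B : Set (Fin n → ℝ) := {c : Fin n → ℝ | ∀ i, c i ∈ Set.Icc (clo i) (chi i)} with hB
  set S : (Fin n → ℝ) → Set ℝ := fun x =>
    ((fun c => ∑ i, c i * x i - X.inf' hX (fun y => ∑ i, c i * y i)) '' B) with hS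
  -- boundedness of the regret sets
  have hbdd : ∀ x ∈ X, BddAbove (S x) := by
    intro x hx
    refine ⟨X.sup' hX (F clo chi x), ?_⟩
    rintro r ⟨c, hcmem, rfl⟩
    obtain ⟨y0, hy0, hy0eq⟩ := Finset.exists_mem_eq_inf' hX (fun y => ∑ i, c i * y i)
    simp only
    rw [hy0eq]
    exact le_trans (sum_le_F hcmem (hbin x hx) (hbin y0 hy0))
      (Finset.le_sup' (F clo chi x) hy0)
  -- F x y is a realized regret value, hence below maxRegret x
  have hF_le : ∀ x ∈ X, ∀ y ∈ X, F clo chi x y ≤ maxRegret n X hX clo chi x := by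
    intro x hx y hy
    have hmem : (∑ i, cw clo chi y i * x i -
        X.inf' hX (fun z => ∑ i, cw clo chi y i * z i)) ∈ S x :=
      ⟨cw clo chi y, fun i => cw_mem hc y i, rfl⟩
    have h1 := le_csSup (hbdd x hx) hmem
    have h2 : X.inf' hX (fun z => ∑ i, cw clo chi y i * z i) ≤
        ∑ i, cw clo chi y i * y i := Finset.inf'_le _ hy
    have h3 : F clo chi x y = ∑ i, cw clo chi y i * x i - ∑ i, cw clo chi y i * y i := by
      unfold F
      rw [← Finset.sum_sub_distrib]
      exact Finset.sum_congr rfl fun i _ => by ring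
    have : F clo chi x y ≤ ∑ i, cw clo chi y i * x i -
        X.inf' hX (fun z => ∑ i, cw clo chi y i * z i) := by rw [h3]; linarith
    exact le_trans this h1
  -- maxRegret is nonnegative on X
  have hreg_nonneg : ∀ x ∈ X, 0 ≤ maxRegret n X hX clo chi x := by
    intro x hx
    have hmem : (∑ i, clo i * x i - X.inf' hX (fun z => ∑ i, clo i * z i)) ∈ S x :=
      ⟨clo, fun i => ⟨le_refl _, hc i⟩, rfl⟩
    have h1 := le_csSup (hbdd x hx) hmem
    have h2 : X.inf' hX (fun z => ∑ i, clo i * z i) ≤ ∑ i, clo i * x i :=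
      Finset.inf'_le _ hx
    have hdef : maxRegret n X hX clo chi x = sSup (S x) := rfl
    rw [hdef]
    linarith
  obtain ⟨x, hx, hinf⟩ := Finset.exists_mem_eq_inf' hX (maxRegret n X hX clo chi)
  rw [hinf]
  -- key: F xm x ≤ F x xm by midpoint optimality
  have hswap : F clo chi xm x ≤ F clo chi x xm := by
    have h1 := F_swap (clo := clo) (chi := chi) (hbin xm hxm) (hbin x hx)
    have h2 : ∑ i, (clo i + chi i) * (xm i - x i) =
        2 * ((∑ i, ((clo i + chi i) / 2) * xm i) - ∑ i, ((clo i + chi i) / 2) * x i) := by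
      rw [← Finset.sum_sub_distrib, Finset.mul_sum]
      exact Finset.sum_congr rfl fun i _ => by ring
    have h3 := hmid x hx
    rw [h2] at h1
    linarith
  have key : ∀ r ∈ S xm, r ≤ 2 * maxRegret n X hX clo chi x := by
    rintro r ⟨c, hcmem, rfl⟩
    obtain ⟨y0, hy0, hy0eq⟩ := Finset.exists_mem_eq_inf' hX (fun y => ∑ i, c i * y i)
    simp only
    rw [hy0eq]
    have h1 : ∑ i, c i * xm i - ∑ i, c i * y0 i ≤ F clo chi xm y0 :=
      sum_le_F hcmem (hbin xm hxm) (hbin y0 hy0)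
    have h2 : F clo chi xm y0 ≤ F clo chi xm x + F clo chi x y0 :=
      F_tri hc (hbin xm hxm) (hbin x hx) (hbin y0 hy0)
    have h3 := hF_le x hx xm hxm
    have h4 := hF_le x hx y0 hy0
    linarith
  exact Real.sSup_le key (by linarith [hreg_nonneg x hx])
end

section
/- Let X be a finite nonempty set and f : X × {1,…,N} → ℝ with f(x,i) ≥ 0 for all x ∈ X and i. Let x* ∈ X be a minimizer of the aggregated objective Σ_{i=1}^N f(x,i) over X. Then max_{i=1,…,N} f(x*, i) ≤ N · min_{x∈X} max_{i=1,…,N} f(x,i); i.e., the minimizer of the scenario sum is an N-approximation for the strictly robust min-max counterpart over a finite uncertainty set with N scenarios. -/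
/-- A minimizer of the aggregated objective `Σ_i f(x,i)` over `X` is an
`N`-approximation for the strictly robust min-max counterpart with `N` scenarios and
nonnegative objective values. -/
theorem sum_minimizer_N_approximation
    {α : Type*} (X : Finset α) (hX : X.Nonempty) (N : ℕ) (hN : 0 < N)
    (f : α → Fin N → ℝ) (hf : ∀ x ∈ X, ∀ i, 0 ≤ f x i)
    (xs : α) (hxs : xs ∈ X) (hmin : ∀ y ∈ X, ∑ i, f xs i ≤ ∑ i, f y i) :
    Finset.univ.sup' (Finset.univ_nonempty_iff.mpr (Fin.pos_iff_nonempty.mp hN)) (f xs) ≤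
      (N : ℝ) * X.inf' hX (fun x => Finset.univ.sup'
        (Finset.univ_nonempty_iff.mpr (Fin.pos_iff_nonempty.mp hN)) (f x)) := by
  have hne : (Finset.univ : Finset (Fin N)).Nonempty :=
    Finset.univ_nonempty_iff.mpr (Fin.pos_iff_nonempty.mp hN)
  obtain ⟨y, hy, hyeq⟩ := Finset.exists_mem_eq_inf' hX
    (fun x => Finset.univ.sup' hne (f x))
  rw [hyeq]
  have h1 : Finset.univ.sup' hne (f xs) ≤ ∑ i, f xs i := by
    apply Finset.sup'_le
    intro i _
    exact Finset.single_le_sum (fun j _ => hf xs hxs j) (Finset.mem_univ i)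
  have h2 : ∑ i, f y i ≤ (N : ℝ) * Finset.univ.sup' hne (f y) := by
    calc ∑ i, f y i ≤ ∑ _i : Fin N, Finset.univ.sup' hne (f y) :=
          Finset.sum_le_sum (fun i _ => Finset.le_sup' _ (Finset.mem_univ i))
      _ = (N : ℝ) * Finset.univ.sup' hne (f y) := by
          simp [Finset.sum_const, nsmul_eq_mul]
  exact h1.trans ((hmin y hy).trans h2)
end

section
/- (Soyster's column-wise uncertainty.) For j = 1, …, n let K_j ⊆ ℝ^m be a nonempty compact set of possible j-th columns of the constraint matrix, and define ā_j ∈ ℝ^m componentwise by (ā_j)_i = max_{A_j ∈ K_j} (A_j)_i. Let b ∈ ℝ^m and let x ∈ ℝ^n with x ≥ 0. Then x satisfies Σ_{j=1}^n x_j A_j ≤ b (componentwise) for every choice (A_1,…,A_n) ∈ K_1 × … × K_n if and only if Σ_{j=1}^n x_j ā_j ≤ b. Equivalently, for every row i, sup over K_1 × … × K_n of Σ_j x_j (A_j)_i equals Σ_j x_j (ā_j)_i. -/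
/-- Soyster's column-wise uncertainty: with nonempty compact column
uncertainty sets `K j` and `(ā j) i = max_{A_j ∈ K j} (A_j) i` (formalized as `sSup` of the
`i`-th coordinate over `K j`), a nonnegative `x` satisfies `Σ_j x_j A_j ≤ b` for every
choice `(A_1,…,A_n) ∈ K_1 × … × K_n` iff `Σ_j x_j ā_j ≤ b`; equivalently, for every row
`i` the supremum of `Σ_j x_j (A_j)_i` over the product equals `Σ_j x_j (ā_j)_i`
(and is attained). -/
theorem soyster_columnwise_robust_counterpart
    (m n : ℕ) (K : Fin n → Set (Fin m → ℝ))
    (hne : ∀ j, (K j).Nonempty) (hcomp : ∀ j, IsCompact (K j))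
    (b : Fin m → ℝ) (x : Fin n → ℝ) (hx : ∀ j, 0 ≤ x j) :
    ((∀ A : Fin n → Fin m → ℝ, (∀ j, A j ∈ K j) →
        ∀ i, ∑ j, x j * A j i ≤ b i) ↔
      (∀ i, ∑ j, x j * sSup ((fun Aj => Aj i) '' K j) ≤ b i)) ∧
    (∀ i, IsGreatest
        {s : ℝ | ∃ A : Fin n → Fin m → ℝ, (∀ j, A j ∈ K j) ∧ s = ∑ j, x j * A j i}
        (∑ j, x j * sSup ((fun Aj => Aj i) '' K j))) := by
  have key : ∀ i, IsGreatest
      {s : ℝ | ∃ A : Fin n → Fin m → ℝ, (∀ j, A j ∈ K j) ∧ s = ∑ j, x j * A j i}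
      (∑ j, x j * sSup ((fun Aj => Aj i) '' K j)) := by
    intro i
    have hcompi : ∀ j, IsCompact ((fun Aj => Aj i) '' K j) := fun j =>
      (hcomp j).image (continuous_apply i)
    have hnei : ∀ j, ((fun Aj => Aj i) '' K j).Nonempty := fun j => (hne j).image _
    have hmem : ∀ j, sSup ((fun Aj => Aj i) '' K j) ∈ (fun Aj => Aj i) '' K j := fun j =>
      (hcompi j).sSup_mem (hnei j)
    constructor
    · choose A hA hAeq using hmem
      exact ⟨A, hA, by exact (Finset.sum_congr rfl fun j _ => by rw [← hAeq j]).symm⟩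
    · rintro s ⟨A, hA, rfl⟩
      refine Finset.sum_le_sum fun j _ => ?_
      exact mul_le_mul_of_nonneg_left
        (le_csSup (hcompi j).bddAbove ⟨A j, hA j, rfl⟩) (hx j)
  refine ⟨⟨fun h i => ?_, fun h A hA i => le_trans ((key i).2 ⟨A, hA, rfl⟩) (h i)⟩, key⟩
  obtain ⟨A, hA, heq⟩ := (key i).1
  rw [heq]; exact h A hA i
end
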